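/- arXiv:2605.12807 — 6 statements merged into one kernel-verified Lean document; each statement's English description precedes it below -/
import Mathlib

section
/- For any joint coupling of random variables X with law μ and Y1,...,Ym with laws ν1,...,νm (all absolutely continuous w.r.t. a common dominating measure λ), the membership probability satisfies Pr(X ∈ {Y1,...,Ym}) ≤ 1 − E_m(μ‖ν̄), where ν̄ = (1/m)Σ_j νj is the mixture barycenter and E_m(μ‖ν̄) = ∫ max(μ(x) − m·ν̄(x), 0) dλ(x) is the hockey-stick divergence of order m. -/
open MeasureTheory
open scoped ENNReal

/-- List-level coupling upper bound: for any coupling of X ~ μ with Y_1,...,Y_m of laws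
ν_1,...,ν_m (densities f, g_j w.r.t. λ), the membership probability satisfies
Pr(X ∈ {Y_1,...,Y_m}) ≤ 1 − E_m(μ‖ν̄), where E_m(μ‖ν̄) = ∫ (f − ∑_j g_j)_+ dλ
is the hockey-stick divergence of order m against the barycenter ν̄ = (1/m)∑ ν_j. -/
theorem stmt3 {α : Type*} [MeasurableSpace α] {m : ℕ}
    (lam : Measure α) (f : α → ℝ≥0∞) (g : Fin m → α → ℝ≥0∞)
    (hf : Measurable f) (hg : ∀ j, Measurable (g j))
    (μ : Measure α) (ν : Fin m → Measure α)
    [IsProbabilityMeasure μ] [∀ j, IsProbabilityMeasure (ν j)]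
    (hμ : μ = lam.withDensity f) (hν : ∀ j, ν j = lam.withDensity (g j))
    (γ : Measure (α × (Fin m → α))) [IsProbabilityMeasure γ]
    (h1 : γ.map Prod.fst = μ) (h2 : ∀ j, γ.map (fun p => p.2 j) = ν j) :
    γ {p : α × (Fin m → α) | ∃ j, p.2 j = p.1} ≤
      1 - ∫⁻ x, (f x - ∑ j, g j x) ∂lam := by
  set G : α → ℝ≥0∞ := fun x => ∑ j, g j x with hG
  have hGmeas : Measurable G := Finset.measurable_sum _ fun j _ => hg j
  set A : Set α := {x | G x < f x} with hA
  have hAmeas : MeasurableSet A := measurableSet_lt hGmeas hf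
  -- measure values
  have hμA : μ A = ∫⁻ x in A, f x ∂lam := by
    rw [hμ, withDensity_apply _ hAmeas]
  have hνA : ∀ j, ν j A = ∫⁻ x in A, g j x ∂lam := fun j => by
    rw [hν j, withDensity_apply _ hAmeas]
  have hGint : ∫⁻ x in A, G x ∂lam = ∑ j, ν j A := by
    rw [hG, lintegral_finset_sum _ fun j _ => hg j]
    exact Finset.sum_congr rfl fun j _ => (hνA j).symm
  have hGfin : ∫⁻ x in A, G x ∂lam ≠ ∞ := by
    rw [hGint]
    exact (lt_of_le_of_lt (Finset.sum_le_sum fun j _ => prob_le_one)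
      (by simp : (∑ _j : Fin m, (1 : ℝ≥0∞)) < ∞)).ne
  -- the divergence equals μ A - ∑ ν j A
  have hDind : (fun x => f x - G x) = A.indicator (fun x => f x - G x) := by
    funext x
    by_cases hx : x ∈ A
    · rw [Set.indicator_of_mem hx]
    · rw [Set.indicator_of_notMem hx]
      exact tsub_eq_zero_of_le (not_lt.mp hx)
  have hD : ∫⁻ x, (f x - G x) ∂lam = μ A - ∑ j, ν j A := by
    rw [lintegral_congr fun x => congrFun hDind x, lintegral_indicator hAmeas]
    rw [lintegral_sub hGmeas hGfin
      ((ae_restrict_iff' hAmeas).2 (Filter.Eventually.of_forall fun x hx => (le_of_lt hx)))]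
    rw [hμA, hGint]
  have hsle : ∑ j, ν j A ≤ μ A := by
    rw [hμA, hGint.symm]
    exact lintegral_mono_ae ((ae_restrict_iff' hAmeas).2
      (Filter.Eventually.of_forall fun x hx => (le_of_lt hx)))
  have hμA1 : μ A ≤ 1 := prob_le_one
  -- event inclusion
  have hsub : {p : α × (Fin m → α) | ∃ j, p.2 j = p.1} ⊆
      Prod.fst ⁻¹' Aᶜ ∪ ⋃ j, (fun p : α × (Fin m → α) => p.2 j) ⁻¹' A := by
    rintro p ⟨j, hj⟩
    by_cases hp : p.1 ∈ A
    · exact Or.inr (Set.mem_iUnion.2 ⟨j, by simpa [hj] using hp⟩)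
    · exact Or.inl hp
  have hbound : γ {p : α × (Fin m → α) | ∃ j, p.2 j = p.1} ≤
      (1 - μ A) + ∑ j, ν j A := by
    refine le_trans (measure_mono hsub) (le_trans (measure_union_le _ _) ?_)
    have e1 : γ (Prod.fst ⁻¹' Aᶜ) = 1 - μ A := by
      rw [← Measure.map_apply measurable_fst hAmeas.compl, h1,
        measure_compl hAmeas (measure_ne_top _ _), measure_univ]
    have e2 : ∀ j, γ ((fun p : α × (Fin m → α) => p.2 j) ⁻¹' A) = ν j A := fun j => by
      rw [← Measure.map_apply (show Measurable fun p : α × (Fin m → α) => p.2 j from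
        (measurable_pi_apply j).comp measurable_snd) hAmeas, h2]
    refine add_le_add (le_of_eq e1) (le_trans (measure_iUnion_fintype_le _ _) ?_)
    exact le_of_eq (Finset.sum_congr rfl fun j _ => e2 j)
  rw [hD]
  have hDfin : μ A - ∑ j, ν j A ≠ ∞ := (lt_of_le_of_lt (tsub_le_self.trans hμA1) ENNReal.one_lt_top).ne
  refine ENNReal.le_sub_of_add_le_right hDfin ?_
  calc γ {p : α × (Fin m → α) | ∃ j, p.2 j = p.1} + (μ A - ∑ j, ν j A)
      ≤ ((1 - μ A) + ∑ j, ν j A) + (μ A - ∑ j, ν j A) := add_le_add hbound le_rfl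
    _ = (1 - μ A) + ((μ A - ∑ j, ν j A) + ∑ j, ν j A) := by ring
    _ = (1 - μ A) + μ A := by rw [tsub_add_cancel_of_le hsle]
    _ = 1 := tsub_add_cancel_of_le hμA1
end

section
/- For random variables X1,...,XC, let G be the number of distinct realized values and D = Σ_{1≤i<j≤C} 1{Xi ≠ Xj} the number of mismatched pairs. Then pathwise D ≥ G(G−1)/2, and consequently E[G] ≤ (1 + √(1 + 8·E[D]))/2. -/
open MeasureTheory

lemma aux_two_mul_card_filter_lt {β : Type*} [LinearOrder β] [DecidableEq β]
    [DecidablePred fun p : β × β => p.1 < p.2] (S : Finset β) :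
    2 * (S.offDiag.filter fun p => p.1 < p.2).card = S.card * (S.card - 1) := by
  have hoff : S.offDiag.card = S.card * (S.card - 1) := by
    rw [Finset.offDiag_card, Nat.mul_sub, Nat.mul_one]
  rw [← hoff]
  have hneg : (S.offDiag.filter fun p => ¬ p.1 < p.2).card
      = (S.offDiag.filter fun p => p.1 < p.2).card := by
    apply Finset.card_bij (fun p _ => Prod.swap p)
    · rintro ⟨a, b⟩ hp
      simp only [Finset.mem_filter, Finset.mem_offDiag] at hp ⊢
      exact ⟨⟨hp.1.2.1, hp.1.1, (Ne.symm hp.1.2.2)⟩,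
        lt_of_le_of_ne (not_lt.mp hp.2) (Ne.symm hp.1.2.2)⟩
    · rintro ⟨a, b⟩ _ ⟨c, d⟩ _ h
      simpa [Prod.ext_iff, and_comm] using h
    · rintro ⟨a, b⟩ hq
      simp only [Finset.mem_filter, Finset.mem_offDiag] at hq
      refine ⟨(b, a), ?_, rfl⟩
      simp only [Finset.mem_filter, Finset.mem_offDiag]
      exact ⟨⟨hq.1.2.1, hq.1.1, Ne.symm hq.1.2.2⟩, not_lt.mpr hq.2.le⟩
  have := Finset.card_filter_add_card_filter_not
    (s := S.offDiag) (p := fun p => p.1 < p.2)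
  omega

open Classical in
/-- For random variables X_1,...,X_C, with G the number of distinct realized values and
D the number of mismatched pairs, pathwise D ≥ G(G−1)/2, and consequently
E[G] ≤ (1 + √(1 + 8 E[D]))/2. -/
theorem stmt6 {Ω α : Type*} [MeasurableSpace Ω]
    (P : Measure Ω) [IsProbabilityMeasure P]
    {C : ℕ} (X : Fin C → Ω → α)
    (G D : Ω → ℕ)
    (hG : ∀ ω, G ω = (Finset.univ.image fun i => X i ω).card)
    (hD : ∀ ω, D ω = (Finset.univ.filter
      (fun p : Fin C × Fin C => p.1 < p.2 ∧ X p.1 ω ≠ X p.2 ω)).card)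
    (hGint : Integrable (fun ω => (G ω : ℝ)) P)
    (hDint : Integrable (fun ω => (D ω : ℝ)) P) :
    (∀ ω, (G ω : ℝ) * ((G ω : ℝ) - 1) / 2 ≤ (D ω : ℝ)) ∧
    ∫ ω, (G ω : ℝ) ∂P ≤ (1 + Real.sqrt (1 + 8 * ∫ ω, (D ω : ℝ) ∂P)) / 2 := by
  -- Pathwise natural-number inequality: G ω * (G ω - 1) ≤ 2 * D ω
  have key : ∀ ω, G ω * (G ω - 1) ≤ 2 * D ω := by
    intro ω
    set s : Finset α := Finset.univ.image fun i => X i ω with hs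
    -- choose representatives
    have hrep : ∀ v ∈ s, ∃ i : Fin C, X i ω = v := by
      intro v hv
      simpa [hs] using hv
    choose rep hrepX using hrep
    set S : Finset (Fin C) := s.attach.image (fun v => rep v.1 v.2) with hS
    have hScard : S.card = s.card := by
      rw [hS, Finset.card_image_of_injective, Finset.card_attach]
      intro a b hab
      have := congrArg (fun i => X i ω) hab
      simp only [hrepX] at this
      exact Subtype.ext this
    have hinj : ∀ i ∈ S, ∀ j ∈ S, X i ω = X j ω → i = j := by
      intro i hi j hj hij
      rw [hS] at hi hj
      obtain ⟨a, _, rfl⟩ := Finset.mem_image.mp hi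
      obtain ⟨b, _, rfl⟩ := Finset.mem_image.mp hj
      rw [hrepX, hrepX] at hij
      rw [Subtype.ext hij]
    have hsub : S.offDiag.filter (fun p => p.1 < p.2) ⊆
        Finset.univ.filter (fun p : Fin C × Fin C => p.1 < p.2 ∧ X p.1 ω ≠ X p.2 ω) := by
      intro p hp
      simp only [Finset.mem_filter, Finset.mem_offDiag] at hp
      simp only [Finset.mem_filter, Finset.mem_univ, true_and]
      refine ⟨hp.2, fun h => hp.1.2.2 (hinj _ hp.1.1 _ hp.1.2.1 h)⟩
    have hcard := Finset.card_le_card hsub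
    have h2 : 2 * (S.offDiag.filter fun p => p.1 < p.2).card = S.card * (S.card - 1) :=
      aux_two_mul_card_filter_lt S
    rw [hD ω, hG ω, ← hs, ← hScard, ← h2]
    omega
  -- Pathwise real inequality
  have keyR : ∀ ω, (G ω : ℝ) * ((G ω : ℝ) - 1) ≤ 2 * (D ω : ℝ) := by
    intro ω
    rcases Nat.eq_zero_or_pos (G ω) with h | h
    · simp [h]
    · have := key ω
      have : ((G ω * (G ω - 1) : ℕ) : ℝ) ≤ ((2 * D ω : ℕ) : ℝ) := by exact_mod_cast this
      push_cast [Nat.cast_sub h] at this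
      linarith
  refine ⟨fun ω => by linarith [keyR ω], ?_⟩
  -- Integrability of G²
  have hsqint : Integrable (fun ω => (G ω : ℝ) ^ 2) P := by
    have hb : ∀ ω, ‖(G ω : ℝ) ^ 2‖ ≤ ‖((fun ω => (G ω : ℝ)) + fun ω => 2 * (D ω : ℝ)) ω‖ := by
      intro ω
      have h1 := keyR ω
      simp only [Pi.add_apply, Real.norm_eq_abs, abs_of_nonneg (show (0:ℝ) ≤ (G ω : ℝ)^2 by positivity),
        abs_of_nonneg (show (0:ℝ) ≤ (G ω : ℝ) + 2 * (D ω : ℝ) by positivity)]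
      nlinarith
    exact (hGint.add (hDint.const_mul 2)).mono
      ((hGint.aestronglyMeasurable.mul hGint.aestronglyMeasurable).congr
        (Filter.EventuallyEq.of_eq (funext fun ω => (sq ((G ω : ℝ))).symm)))
      (Filter.Eventually.of_forall hb)
  have hmem : MemLp (fun ω => (G ω : ℝ)) 2 P :=
    (memLp_two_iff_integrable_sq hGint.aestronglyMeasurable).mpr hsqint
  -- (∫ G)² ≤ ∫ G²
  have hvar := ProbabilityTheory.variance_nonneg (fun ω => (G ω : ℝ)) P
  rw [ProbabilityTheory.variance_eq_sub hmem] at hvar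
  set m := ∫ ω, (G ω : ℝ) ∂P with hm
  set d := ∫ ω, (D ω : ℝ) ∂P with hd
  have hsq : m ^ 2 ≤ ∫ ω, (G ω : ℝ) ^ 2 ∂P := by
    simpa using hvar
  -- ∫ G² ≤ m + 2 d
  have hint2 : ∫ ω, (G ω : ℝ) ^ 2 ∂P ≤ m + 2 * d := by
    have : ∫ ω, (G ω : ℝ) ^ 2 ∂P ≤ ∫ ω, ((G ω : ℝ) + 2 * (D ω : ℝ)) ∂P := by
      apply integral_mono hsqint (hGint.add (hDint.const_mul 2))
      intro ω
      simp only [Pi.add_apply]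
      nlinarith [keyR ω]
    rwa [integral_add hGint (hDint.const_mul 2), integral_const_mul] at this
  have hd0 : 0 ≤ d := by
    rw [hd]; exact integral_nonneg fun ω => by positivity
  have hmm : m ^ 2 ≤ m + 2 * d := le_trans hsq hint2
  -- conclude
  have hsqrt0 : 0 ≤ Real.sqrt (1 + 8 * d) := Real.sqrt_nonneg _
  rcases le_or_gt (2 * m - 1) 0 with h | h
  · linarith
  · have : 2 * m - 1 ≤ Real.sqrt (1 + 8 * d) := by
      rw [Real.le_sqrt h.le (by linarith)]
      nlinarith
    linarith
end

section
/- The optimal multi-marginal objective G* = inf over couplings of E[number of distinct values among X1,...,XC] satisfies the lower bound G* ≥ 1 + sup over permutations σ of Σ_{k=1}^{C−1} E_{C−k}(P^{σ(k)} ‖ ν̄^{σ(k)}), where ν̄^{σ(k)} = (1/(C−k))Σ_{j=k+1}^C P^{σ(j)} and E_m is the hockey-stick divergence of order m. -/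
open MeasureTheory
open scoped ENNReal

open Classical in
lemma card_image_eq_aux {α : Type*} {C : ℕ} (σ : Equiv.Perm (Fin C)) (f : Fin C → α) :
    (Finset.univ.image f).card =
      (Finset.univ.filter (fun k : Fin C => ∀ j ∈ Finset.Ioi k, f (σ j) ≠ f (σ k))).card := by
  classical
  symm
  apply Finset.card_bij (fun k _ => f (σ k))
  · intro k _; exact Finset.mem_image_of_mem f (Finset.mem_univ _)
  · intro k₁ h₁ k₂ h₂ he
    simp only [Finset.mem_filter] at h₁ h₂
    by_contra hne
    rcases lt_or_gt_of_ne hne with h | h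
    · exact h₁.2 k₂ (Finset.mem_Ioi.mpr h) he.symm
    · exact h₂.2 k₁ (Finset.mem_Ioi.mpr h) he
  · intro b hb
    obtain ⟨i, -, rfl⟩ := Finset.mem_image.mp hb
    set s := Finset.univ.filter (fun k : Fin C => f (σ k) = f i) with hs
    have hne : s.Nonempty := ⟨σ.symm i, by simp [hs]⟩
    refine ⟨s.max' hne, ?_, ?_⟩
    · simp only [Finset.mem_filter, Finset.mem_univ, true_and]
      intro j hj hje
      have : j ∈ s := by
        have : f (σ (s.max' hne)) = f i := (Finset.mem_filter.mp (s.max'_mem hne)).2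
        exact Finset.mem_filter.mpr ⟨Finset.mem_univ _, hje.trans this⟩
      exact absurd (s.le_max' j this) (not_le.mpr (Finset.mem_Ioi.mp hj))
    · exact (Finset.mem_filter.mp (s.max'_mem hne)).2

open Classical in
/-- Lower bound on the optimal multi-marginal objective
G* = inf over couplings of E[number of distinct values]:
G* ≥ 1 + sup over permutations σ of Σ_k E_{C−k}(P^{σ(k)} ‖ ν̄^{σ(k)}),
where (C−k)·ν̄^{σ(k)} = Σ_{j>k} P^{σ(j)} and E_m is the hockey-stick divergence,
here written as ∫ (g_{σ(k)} − Σ_{j>k} g_{σ(j)})_+ dλ in terms of densities. -/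
theorem stmt8 {α : Type*} [MeasurableSpace α] {C : ℕ} (hC : 0 < C)
    (lam : Measure α) (g : Fin C → α → ℝ≥0∞) (hg : ∀ i, Measurable (g i))
    (P : Fin C → Measure α) [∀ i, IsProbabilityMeasure (P i)]
    (hP : ∀ i, P i = lam.withDensity (g i)) :
    1 + (⨆ σ : Equiv.Perm (Fin C),
        ∑ k ∈ Finset.univ.filter (fun k : Fin C => (k : ℕ) + 1 < C),
          ∫⁻ x, (g (σ k) x - ∑ j ∈ Finset.Ioi k, g (σ j) x) ∂lam) ≤
      ⨅ γ : {γ : Measure (Fin C → α) // IsProbabilityMeasure γ ∧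
          ∀ i, γ.map (fun f => f i) = P i},
        ∫⁻ f, ((Finset.univ.image f).card : ℝ≥0∞) ∂(γ.1) := by
  have hone : ∀ i : Fin C, ∫⁻ x, g i x ∂lam = 1 := by
    intro i
    have h : P i Set.univ = 1 := measure_univ
    rwa [hP i, withDensity_apply _ MeasurableSet.univ, Measure.restrict_univ] at h
  apply le_iInf
  rintro ⟨γ, hprob, hmarg⟩
  rw [ENNReal.add_iSup]
  apply iSup_le
  intro σ
  simp only
  set A : Fin C → Set α := fun k => {x | (∑ j ∈ Finset.Ioi k, g (σ j) x) < g (σ k) x} with hA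
  have hAmeas : ∀ k, MeasurableSet (A k) := fun k =>
    measurableSet_lt (Finset.measurable_sum _ fun j _ => hg _) (hg _)
  set φ : Fin C → (Fin C → α) → ℝ≥0∞ := fun k f =>
    (A k).indicator 1 (f (σ k)) - ∑ j ∈ Finset.Ioi k, (A k).indicator 1 (f (σ j)) with hφ
  have hind : ∀ k, Measurable ((A k).indicator (1 : α → ℝ≥0∞)) := fun k =>
    measurable_const.indicator (hAmeas k)
  have hcomp : ∀ k i : Fin C,
      Measurable fun f : Fin C → α => (A k).indicator (1 : α → ℝ≥0∞) (f (σ i)) :=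
    fun k i => (hind k).comp (measurable_pi_apply _)
  have hsumm : ∀ k : Fin C,
      Measurable fun f : Fin C → α =>
        ∑ j ∈ Finset.Ioi k, (A k).indicator (1 : α → ℝ≥0∞) (f (σ j)) :=
    fun k => Finset.measurable_sum _ fun j _ => hcomp k j
  have hφmeas : ∀ k, Measurable (φ k) := fun k => (hcomp k k).sub (hsumm k)
  set filt := Finset.univ.filter (fun k : Fin C => (k : ℕ) + 1 < C) with hfilt
  -- pointwise key bound
  have key : ∀ f : Fin C → α,
      1 + ∑ k ∈ filt, φ k f ≤ ((Finset.univ.image f).card : ℝ≥0∞) := by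
    intro f
    set χ : Fin C → ℝ≥0∞ := fun k =>
      if ∀ j ∈ Finset.Ioi k, f (σ j) ≠ f (σ k) then 1 else 0 with hχ
    have hcard : ((Finset.univ.image f).card : ℝ≥0∞) = ∑ k : Fin C, χ k := by
      rw [card_image_eq_aux σ f, Finset.card_filter]
      push_cast
      rfl
    set k₀ : Fin C := ⟨C - 1, Nat.sub_lt hC one_pos⟩ with hk₀
    have hfe : filt = Finset.univ.erase k₀ := by
      ext k
      simp only [hfilt, Finset.mem_filter, Finset.mem_univ, true_and, Finset.mem_erase,
        and_true]
      constructor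
      · intro h hk
        rw [hk] at h
        simp only [hk₀] at h
        omega
      · intro h
        have hk : (k : ℕ) < C := k.isLt
        rcases Nat.lt_or_ge ((k : ℕ) + 1) C with h' | h'
        · exact h'
        · exfalso; apply h; apply Fin.ext; simp only [hk₀]; omega
    have hχk₀ : χ k₀ = 1 := by
      have hvac : ∀ j ∈ Finset.Ioi k₀, f (σ j) ≠ f (σ k₀) := by
        intro j hj
        exfalso
        have h1 : k₀ < j := Finset.mem_Ioi.mp hj
        have h1' : (k₀ : ℕ) < (j : ℕ) := h1
        have h2 : (j : ℕ) < C := j.isLt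
        simp only [hk₀] at h1'
        omega
      simp only [hχ]
      rw [if_pos hvac]
    have hsum : ∑ k : Fin C, χ k = 1 + ∑ k ∈ filt, χ k := by
      rw [hfe, ← Finset.add_sum_erase _ _ (Finset.mem_univ k₀), hχk₀]
    rw [hcard, hsum]
    apply add_le_add_right
    apply Finset.sum_le_sum
    intro k hk
    by_cases hp : ∀ j ∈ Finset.Ioi k, f (σ j) ≠ f (σ k)
    · have hone' : χ k = 1 := by
        simp [hχ, hp]
        exact fun x hx => hp x (Finset.mem_Ioi.mpr hx)
      rw [hone', hφ]
      refine le_trans tsub_le_self ?_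
      by_cases hx : f (σ k) ∈ A k <;> simp [Set.indicator, hx]
    · push_neg at hp
      obtain ⟨j, hj, hje⟩ := hp
      have hzero' : χ k = 0 := by
        simp only [hχ]
        rw [if_neg]
        push_neg
        exact ⟨j, hj, hje⟩
      rw [hzero', hφ]
      by_cases hx : f (σ k) ∈ A k
      · have h1 : (A k).indicator (1 : α → ℝ≥0∞) (f (σ k)) = 1 := by
          simp [Set.indicator, hx]
        have h2 : (1 : ℝ≥0∞) ≤ ∑ j' ∈ Finset.Ioi k, (A k).indicator 1 (f (σ j')) := by
          have hjv : (A k).indicator (1 : α → ℝ≥0∞) (f (σ j)) = 1 := by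
            rw [hje]; simp [Set.indicator, hx]
          calc (1 : ℝ≥0∞) = (A k).indicator (1 : α → ℝ≥0∞) (f (σ j)) := hjv.symm
            _ ≤ _ := Finset.single_le_sum (f := fun j' => (A k).indicator
                (1 : α → ℝ≥0∞) (f (σ j'))) (fun _ _ => zero_le) hj
        simp only [h1]
        simp [tsub_eq_zero_of_le h2]
      · have h1 : (A k).indicator (1 : α → ℝ≥0∞) (f (σ k)) = 0 := by
          simp [Set.indicator, hx]
        simp [hφ, h1, zero_tsub]
  -- marginal indicator integrals
  have hindint : ∀ (k i : Fin C),
      ∫⁻ f, (A k).indicator 1 (f (σ i)) ∂γ = P (σ i) (A k) := by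
    intro k i
    have := lintegral_map (μ := γ) (f := (A k).indicator (1 : α → ℝ≥0∞))
      (g := fun f : Fin C → α => f (σ i)) (hind k) (measurable_pi_apply _)
    rw [hmarg (σ i)] at this
    rw [← this, lintegral_indicator_one (hAmeas k)]
  have hPA : ∀ (i k : Fin C), P i (A k) = ∫⁻ x in A k, g i x ∂lam := by
    intro i k
    rw [hP i, withDensity_apply _ (hAmeas k)]
  -- each hockey-stick term is at most ∫ φ k dγ
  have hterm : ∀ k ∈ filt,
      ∫⁻ x, (g (σ k) x - ∑ j ∈ Finset.Ioi k, g (σ j) x) ∂lam ≤ ∫⁻ f, φ k f ∂γ := by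
    intro k _
    set b : α → ℝ≥0∞ := fun x => ∑ j ∈ Finset.Ioi k, g (σ j) x with hb
    have hbmeas : Measurable b := Finset.measurable_sum _ fun j _ => hg _
    have hzero : ∫⁻ x in (A k)ᶜ, (g (σ k) x - b x) ∂lam = 0 := by
      rw [setLIntegral_congr_fun (hAmeas k).compl
        (fun x hx => ?_), lintegral_zero]
      have : ¬ (b x < g (σ k) x) := hx
      exact tsub_eq_zero_of_le (not_lt.mp this)
    have hsplit : ∫⁻ x, (g (σ k) x - b x) ∂lam = ∫⁻ x in A k, (g (σ k) x - b x) ∂lam := by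
      rw [← lintegral_add_compl _ (hAmeas k), hzero, add_zero]
    have hAdd : ∫⁻ x in A k, (g (σ k) x - b x) ∂lam + ∫⁻ x in A k, b x ∂lam
        = ∫⁻ x in A k, g (σ k) x ∂lam := by
      rw [← lintegral_add_right _ hbmeas]
      refine setLIntegral_congr_fun (hAmeas k) (fun x hx => ?_)
      exact tsub_add_cancel_of_le (le_of_lt hx)
    have hbfin : ∫⁻ x in A k, b x ∂lam ≠ ∞ := by
      have hble : ∫⁻ x in A k, b x ∂lam ≤ ∑ j ∈ Finset.Ioi k, (1 : ℝ≥0∞) := by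
        calc ∫⁻ x in A k, b x ∂lam ≤ ∫⁻ x, b x ∂lam := setLIntegral_le_lintegral _ _
          _ = ∑ j ∈ Finset.Ioi k, ∫⁻ x, g (σ j) x ∂lam := by
              simp only [hb]
              exact lintegral_finset_sum _ fun j _ => hg _
          _ = ∑ j ∈ Finset.Ioi k, 1 := Finset.sum_congr rfl fun j _ => hone _
      exact ne_top_of_le_ne_top (by simp) hble
    have h1 : ∫⁻ x, (g (σ k) x - b x) ∂lam
        ≤ ∫⁻ x in A k, g (σ k) x ∂lam - ∫⁻ x in A k, b x ∂lam := by
      rw [hsplit]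
      exact (ENNReal.eq_sub_of_add_eq hbfin hAdd).le
    refine h1.trans ?_
    rw [tsub_le_iff_right]
    have h2 : ∫⁻ x in A k, g (σ k) x ∂lam = ∫⁻ f, (A k).indicator 1 (f (σ k)) ∂γ := by
      rw [hindint k k, hPA]
    have h3 : ∫⁻ x in A k, b x ∂lam
        = ∫⁻ f, ∑ j ∈ Finset.Ioi k, (A k).indicator 1 (f (σ j)) ∂γ := by
      rw [lintegral_finset_sum _ (fun j _ => hcomp k j)]
      simp only [hb]
      rw [lintegral_finset_sum _ (fun j _ => hg _)]
      exact Finset.sum_congr rfl fun j _ => by rw [hindint k j, hPA]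
    rw [h2, h3, ← lintegral_add_right _ (hsumm k)]
    apply lintegral_mono
    intro f
    exact le_tsub_add
  calc 1 + ∑ k ∈ filt, ∫⁻ x, (g (σ k) x - ∑ j ∈ Finset.Ioi k, g (σ j) x) ∂lam
      ≤ 1 + ∑ k ∈ filt, ∫⁻ f, φ k f ∂γ := add_le_add_right (Finset.sum_le_sum hterm) _
    _ = ∫⁻ f, (1 + ∑ k ∈ filt, φ k f) ∂γ := by
        rw [lintegral_add_left measurable_const, lintegral_const,
          lintegral_finset_sum _ fun k _ => hφmeas k]
        simp [hprob.measure_univ]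
    _ ≤ ∫⁻ f, ((Finset.univ.image f).card : ℝ≥0∞) ∂γ := lintegral_mono key
end

section
/- Let P^0 = Exp(1) and P^i = i + Exp(1) for i = 1,...,m (shifted exponentials with unit scale). Then the order-m hockey-stick divergence between P^0 and the barycenter P̄ = (1/m)Σ_{i=1}^m P^i equals 1 − e^{−1}. -/
open MeasureTheory

lemma key10 (m : ℕ) (hm : 1 ≤ m) (x : ℝ) :
    max ((if (0:ℝ) ≤ x then Real.exp (-x) else 0)
        - ∑ i ∈ Finset.Icc 1 m,
            (if (i : ℝ) ≤ x then Real.exp (-(x - (i : ℝ))) else 0)) 0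
      = Set.indicator (Set.Ico (0:ℝ) 1) (fun x => Real.exp (-x)) x := by
  rcases lt_or_ge x 1 with h1 | h1
  · have hsum : ∑ i ∈ Finset.Icc 1 m,
        (if (i : ℝ) ≤ x then Real.exp (-(x - (i : ℝ))) else 0) = 0 := by
      apply Finset.sum_eq_zero
      intro i hi
      have : (1:ℝ) ≤ (i:ℝ) := by exact_mod_cast (Finset.mem_Icc.mp hi).1
      rw [if_neg (by linarith)]
    rw [hsum, sub_zero]
    rcases le_or_gt 0 x with h0 | h0
    · rw [if_pos h0, Set.indicator_of_mem (Set.mem_Ico.mpr ⟨h0, h1⟩)]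
      exact max_eq_left (Real.exp_pos _).le
    · rw [if_neg (not_le.mpr h0),
        Set.indicator_of_notMem (fun h => (not_le.mpr h0) h.1)]
      simp
  · have hx0 : (0:ℝ) ≤ x := by linarith
    rw [Set.indicator_of_notMem (fun h => absurd h.2 (not_lt.mpr h1))]
    apply max_eq_right
    rw [if_pos hx0]
    have h1mem : 1 ∈ Finset.Icc 1 m := Finset.mem_Icc.mpr ⟨le_refl 1, hm⟩
    have hle : Real.exp (-(x - (1:ℝ))) ≤ ∑ i ∈ Finset.Icc 1 m,
        (if (i : ℝ) ≤ x then Real.exp (-(x - (i : ℝ))) else 0) := by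
      have := Finset.single_le_sum
        (f := fun i : ℕ => if (i : ℝ) ≤ x then Real.exp (-(x - (i : ℝ))) else 0)
        (fun i _ => by positivity) h1mem
      simp only [Nat.cast_one, if_pos h1] at this
      exact this
    have : Real.exp (-x) ≤ Real.exp (-(x - 1)) := by
      apply Real.exp_le_exp.mpr; linarith
    linarith

/-- For P^0 = Exp(1) and shifted exponentials P^i = i + Exp(1), i = 1,...,m,
the order-m hockey-stick divergence between P^0 and the barycenter
P̄ = (1/m)Σ_i P^i equals 1 − e^{−1}:
E_m(P^0‖P̄) = ∫ (p_0(x) − Σ_{i=1}^m p_i(x))_+ dx = 1 − e^{−1}. -/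
theorem stmt10 (m : ℕ) (hm : 1 ≤ m) :
    ∫ x : ℝ, max ((if (0:ℝ) ≤ x then Real.exp (-x) else 0)
        - ∑ i ∈ Finset.Icc 1 m,
            (if (i : ℝ) ≤ x then Real.exp (-(x - (i : ℝ))) else 0)) 0
      = 1 - Real.exp (-1) := by
  have h := funext (key10 m hm)
  rw [h, integral_indicator measurableSet_Ico, restrict_Ico_eq_restrict_Ioc,
    ← intervalIntegral.integral_of_le zero_le_one,
    intervalIntegral.integral_comp_neg (fun x => Real.exp x), integral_exp]
  simp
end

section
/- For shifted exponential measures P^i = i + Exp(1), i = 0,...,C−1, the optimal multi-marginal coupling objective equals G* = C − (C−1)·e^{−1}, where G* is the infimum over couplings of the expected number of distinct realized values. -/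
open MeasureTheory
open scoped ENNReal

open MeasureTheory Real Set
open Fin.NatCast
open scoped ENNReal

noncomputable def SE (c : ℝ) : Measure ℝ :=
  volume.withDensity fun x => ENNReal.ofReal (if c ≤ x then Real.exp (-(x - c)) else 0)

lemma SE_density_eq (c : ℝ) :
    (fun x => ENNReal.ofReal (if c ≤ x then Real.exp (-(x - c)) else 0)) =
      (Ici c).indicator fun x => ENNReal.ofReal (Real.exp (-(x - c))) := by
  funext x
  by_cases h : c ≤ x <;> simp [Set.indicator, h]

lemma SE_density_measurable (c : ℝ) :
    Measurable fun x => ENNReal.ofReal (if c ≤ x then Real.exp (-(x - c)) else 0) := by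
  rw [SE_density_eq]
  exact (ENNReal.measurable_ofReal.comp
    ((Real.continuous_exp.comp (continuous_id.sub continuous_const).neg).measurable)).indicator
    measurableSet_Ici

lemma SE_apply {s : Set ℝ} (hs : MeasurableSet s) (c : ℝ) :
    SE c s = ∫⁻ x in s ∩ Ici c, ENNReal.ofReal (Real.exp (-(x - c))) := by
  rw [SE, withDensity_apply _ hs, SE_density_eq,
    lintegral_indicator measurableSet_Ici, Measure.restrict_restrict measurableSet_Ici,
    Set.inter_comm]

lemma exp_shift_integrableOn {A : Set ℝ} (c : ℝ) (hA : A ⊆ Ioi c) :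
    IntegrableOn (fun x => Real.exp (-(x - c))) A := by
  have h : (fun x : ℝ => Real.exp (-(x - c))) = fun x => Real.exp c * Real.exp (-(1 : ℝ) * x) := by
    funext x; rw [← Real.exp_add]; ring_nf
  rw [h]
  exact (IntegrableOn.mono_set ((exp_neg_integrableOn_Ioi c one_pos).const_mul _) hA)

lemma lint_Ioi (c : ℝ) : ∫⁻ x in Ioi c, ENNReal.ofReal (Real.exp (-(x - c))) = 1 := by
  rw [← ofReal_integral_eq_lintegral_ofReal (exp_shift_integrableOn c subset_rfl)
    (Filter.Eventually.of_forall fun x => (Real.exp_pos _).le)]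
  have h : (fun x : ℝ => Real.exp (-(x - c))) = fun x => Real.exp c * Real.exp (-x) := by
    funext x; rw [← Real.exp_add]; ring_nf
  rw [h, MeasureTheory.integral_const_mul, integral_exp_neg_Ioi, ← Real.exp_add,
    add_neg_cancel, Real.exp_zero, ENNReal.ofReal_one]

lemma lint_Ioc (c : ℝ) : ∫⁻ x in Ioc c (c + 1), ENNReal.ofReal (Real.exp (-(x - c)))
    = ENNReal.ofReal (1 - Real.exp (-1)) := by
  rw [← ofReal_integral_eq_lintegral_ofReal
    (exp_shift_integrableOn c Ioc_subset_Ioi_self)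
    (Filter.Eventually.of_forall fun x => (Real.exp_pos _).le)]
  congr 1
  have hle : c ≤ c + 1 := by linarith
  rw [← intervalIntegral.integral_of_le hle]
  have h : (fun x : ℝ => Real.exp (-(x - c))) = fun x => Real.exp c * Real.exp (-x) := by
    funext x; rw [← Real.exp_add]; ring_nf
  rw [h, intervalIntegral.integral_const_mul]
  have : ∫ x in c..(c+1), Real.exp (-x) = Real.exp (-c) - Real.exp (-(c+1)) := by
    have := intervalIntegral.integral_comp_neg (a := c) (b := c + 1) Real.exp
    rw [this, integral_exp]
  rw [this, mul_sub, ← Real.exp_add, ← Real.exp_add, add_neg_cancel, Real.exp_zero]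
  ring_nf

lemma SE_univ (c : ℝ) : SE c Set.univ = 1 := by
  rw [SE_apply MeasurableSet.univ, Set.univ_inter,
    ← Measure.restrict_congr_set Ioi_ae_eq_Ici, lint_Ioi]

instance SE_prob (c : ℝ) : IsProbabilityMeasure (SE c) := ⟨SE_univ c⟩

lemma SE_Iio_self (c : ℝ) : SE c (Iio c) = 0 := by
  rw [SE_apply measurableSet_Iio]
  rw [Set.Iio_inter_Ici, Set.Ico_self]; simp

lemma SE_Iio_succ (c : ℝ) : SE c (Iio (c + 1)) = ENNReal.ofReal (1 - Real.exp (-1)) := by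
  rw [SE_apply measurableSet_Iio]
  rw [Set.Iio_inter_Ici, Measure.restrict_congr_set Ico_ae_eq_Ioc, lint_Ioc]

lemma SE_inter_Ici {s : Set ℝ} (hs : MeasurableSet s) (c : ℝ) :
    SE c (s ∩ Ici (c + 1)) = ENNReal.ofReal (Real.exp (-1)) * SE (c + 1) s := by
  rw [SE_apply (hs.inter measurableSet_Ici), SE_apply hs]
  have h1 : s ∩ Ici (c + 1) ∩ Ici c = s ∩ Ici (c + 1) := by
    rw [Set.inter_assoc]
    congr 1
    rw [Set.inter_eq_left]
    exact fun x hx => le_trans (by linarith : c ≤ c + 1) hx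
  rw [h1, ← lintegral_const_mul _ (by
    exact ENNReal.measurable_ofReal.comp
      (Real.continuous_exp.comp (continuous_id.sub continuous_const).neg).measurable)]
  apply setLIntegral_congr_fun (hs.inter measurableSet_Ici)
  intro x _
  beta_reduce
  rw [← ENNReal.ofReal_mul (Real.exp_pos _).le, ← Real.exp_add]
  ring_nf

lemma SE_map_add (c : ℝ) : (SE 0).map (fun x => c + x) = SE c := by
  ext s hs
  rw [Measure.map_apply (measurable_const_add c) hs, SE_apply (measurable_const_add c hs),
    SE_apply hs]
  have hvol : (volume : Measure ℝ) = volume.map (fun x => c + x) :=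
    (measurePreserving_add_left volume c).map_eq.symm
  have hres : (volume : Measure ℝ).restrict (s ∩ Ici c)
      = ((volume.restrict ((fun x => c + x) ⁻¹' (s ∩ Ici c))).map (fun x => c + x)) := by
    conv_lhs => rw [hvol]
    rw [Measure.restrict_map (measurable_const_add c) (hs.inter measurableSet_Ici)]
  rw [hres, lintegral_map (f := fun x : ℝ => ENNReal.ofReal (Real.exp (-(x - c))))
      (by fun_prop) (measurable_const_add c)]
  have hpre : (fun x => c + x) ⁻¹' (s ∩ Ici c) = ((fun x => c + x) ⁻¹' s) ∩ Ici 0 := by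
    ext x
    simp only [Set.mem_preimage, Set.mem_inter_iff, Set.mem_Ici]
    constructor <;> rintro ⟨h1, h2⟩ <;> exact ⟨h1, by linarith⟩
  rw [hpre]
  apply setLIntegral_congr_fun ((measurable_const_add c hs).inter measurableSet_Ici)
  intro x _
  ring_nf

lemma measurable_step (a : ℝ) :
    Measurable (fun p : ℝ × ℝ => if a + 1 ≤ p.1 then p.1 else (a + 1) + p.2) :=
  Measurable.ite (measurableSet_le measurable_const measurable_fst) measurable_fst
    (measurable_const.add measurable_snd)

lemma SE_step (a : ℝ) :
    ((SE a).prod (SE 0)).map (fun p : ℝ × ℝ => if a + 1 ≤ p.1 then p.1 else (a + 1) + p.2)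
      = SE (a + 1) := by
  ext s hs
  rw [Measure.map_apply (measurable_step a) hs, Measure.prod_apply (measurable_step a hs)]
  have hK : SE 0 ((fun y => (a + 1) + y) ⁻¹' s) = SE (a + 1) s := by
    rw [← SE_map_add (a + 1), Measure.map_apply (measurable_const_add _) hs]
  have hslice : (fun x => SE 0 (Prod.mk x ⁻¹' ((fun p : ℝ × ℝ =>
      if a + 1 ≤ p.1 then p.1 else (a + 1) + p.2) ⁻¹' s)))
      = fun x => if a + 1 ≤ x then s.indicator (fun _ => (1 : ℝ≥0∞)) x else SE (a + 1) s := by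
    funext x
    by_cases h : a + 1 ≤ x
    · by_cases hx : x ∈ s
      · have : Prod.mk x ⁻¹' ((fun p : ℝ × ℝ =>
            if a + 1 ≤ p.1 then p.1 else (a + 1) + p.2) ⁻¹' s) = Set.univ := by
          ext y; simp [h, hx]
        simp [this, h, hx]
      · have : Prod.mk x ⁻¹' ((fun p : ℝ × ℝ =>
            if a + 1 ≤ p.1 then p.1 else (a + 1) + p.2) ⁻¹' s) = ∅ := by
          ext y; simp [h, hx]
        simp [this, h, hx]
    · have : Prod.mk x ⁻¹' ((fun p : ℝ × ℝ =>
          if a + 1 ≤ p.1 then p.1 else (a + 1) + p.2) ⁻¹' s)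
          = ((fun y => (a + 1) + y) ⁻¹' s) := by
        ext y; simp [h]
      rw [this, hK, if_neg h]
  rw [hslice, ← lintegral_add_compl _ (measurableSet_Ici (a := a + 1)), compl_Ici]
  have h1 : ∫⁻ x in Ici (a + 1), (if a + 1 ≤ x then s.indicator (fun _ => (1 : ℝ≥0∞)) x
      else SE (a + 1) s) ∂SE a = SE a (s ∩ Ici (a + 1)) := by
    have e1 : ∫⁻ x in Ici (a + 1), (if a + 1 ≤ x then s.indicator (fun _ => (1 : ℝ≥0∞)) x
        else SE (a + 1) s) ∂SE a = ∫⁻ x in Ici (a + 1), s.indicator (fun _ => (1:ℝ≥0∞)) x ∂SE a :=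
      setLIntegral_congr_fun measurableSet_Ici
        (fun x hx => by
          simp only [Set.mem_Ici] at hx; rw [if_pos hx])
    rw [e1, lintegral_indicator hs, setLIntegral_one, Measure.restrict_apply hs]
  have h2 : ∫⁻ x in Iio (a + 1), (if a + 1 ≤ x then s.indicator (fun _ => (1 : ℝ≥0∞)) x
      else SE (a + 1) s) ∂SE a = SE (a + 1) s * SE a (Iio (a + 1)) := by
    have e2 : ∫⁻ x in Iio (a + 1), (if a + 1 ≤ x then s.indicator (fun _ => (1 : ℝ≥0∞)) x
        else SE (a + 1) s) ∂SE a = ∫⁻ _ in Iio (a + 1), SE (a + 1) s ∂SE a :=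
      setLIntegral_congr_fun measurableSet_Iio
        (fun x hx => by
          simp only [Set.mem_Iio] at hx; rw [if_neg (not_le.mpr hx)])
    rw [e2, setLIntegral_const]
  rw [h1, h2, SE_inter_Ici hs, SE_Iio_succ]
  rw [mul_comm (SE (a+1) s) _, ← add_mul, ← ENNReal.ofReal_add (Real.exp_pos _).le
    (by nlinarith [Real.exp_pos (-1 : ℝ), Real.exp_le_one_iff.mpr (by norm_num : (-1:ℝ) ≤ 0)]),
    add_sub_cancel, ENNReal.ofReal_one, one_mul]

lemma pi_map_eval {ι : Type*} [Fintype ι] {α : ι → Type*} [∀ i, MeasurableSpace (α i)]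
    (μ : ∀ i, Measure (α i)) [∀ i, IsProbabilityMeasure (μ i)] (i : ι) :
    (Measure.pi μ).map (Function.eval i) = μ i := by
  classical
  ext s hs
  rw [Measure.map_apply (measurable_pi_apply i) hs, Set.eval_preimage, Measure.pi_pi]
  rw [Fintype.prod_eq_single i (fun j hj => by
    rw [Function.update_of_ne hj]; exact measure_univ)]
  rw [Function.update_self]

noncomputable def Xc (N : ℕ) : ℕ → (Fin (N + 1) → ℝ) → ℝ
  | 0 => fun e => e 0
  | (n + 1) => fun e => if ((n : ℝ) + 1) ≤ Xc N n e then Xc N n e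
      else ((n : ℝ) + 1) + e ((n + 1 : ℕ) : Fin (N + 1))

lemma measurable_Xc (N n : ℕ) : Measurable (Xc N n) := by
  induction n with
  | zero => exact measurable_pi_apply _
  | succ n ih =>
    exact Measurable.ite (measurableSet_le measurable_const ih) ih
      (measurable_const.add (measurable_pi_apply _))

lemma Xc_congr (N n : ℕ) {e e' : Fin (N + 1) → ℝ}
    (h : ∀ k : Fin (N + 1), (k : ℕ) ≤ n → e k = e' k) : Xc N n e = Xc N n e' := by
  induction n with
  | zero => exact h 0 (by simp)
  | succ n ih =>
    have h1 : Xc N n e = Xc N n e' := ih fun k hk => h k (le_trans hk (Nat.le_succ n))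
    have h2 : e ((n + 1 : ℕ) : Fin (N + 1)) = e' ((n + 1 : ℕ) : Fin (N + 1)) := by
      apply h
      rw [Fin.val_natCast]
      exact Nat.mod_le _ _
    show (if ((n : ℝ) + 1) ≤ Xc N n e then Xc N n e else ((n : ℝ) + 1) + e _)
      = (if ((n : ℝ) + 1) ≤ Xc N n e' then Xc N n e' else ((n : ℝ) + 1) + e' _)
    rw [h1, h2]

noncomputable def μpi (N : ℕ) : Measure (Fin (N + 1) → ℝ) :=
  Measure.pi fun _ => SE 0

instance μpi_prob (N : ℕ) : IsProbabilityMeasure (μpi N) := by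
  unfold μpi; infer_instance

lemma pair_law (N n : ℕ) (hn : n + 1 ≤ N) :
    (μpi N).map (fun e => (Xc N n e, e ((n + 1 : ℕ) : Fin (N + 1))))
      = ((μpi N).map (Xc N n)).prod (SE 0) := by
  classical
  unfold μpi
  set j : Fin (N + 1) := ((n + 1 : ℕ) : Fin (N + 1)) with hj
  have hjval : (j : ℕ) = n + 1 := by
    rw [hj, Fin.val_natCast]; exact Nat.mod_eq_of_lt (by omega)
  set p : Fin (N + 1) → Prop := fun k => (k : ℕ) ≤ n with hp
  have hjp : ¬ p j := by rw [hp]; simp [hjval]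
  set equiv := MeasurableEquiv.piEquivPiSubtypeProd (fun _ : Fin (N + 1) => ℝ) p with hequiv
  have mp := measurePreserving_piEquivPiSubtypeProd (fun _ : Fin (N + 1) => SE 0) p
  set X' : ({k // p k} → ℝ) → ℝ :=
    fun a => Xc N n (fun k => if h : p k then a ⟨k, h⟩ else 0) with hX'def
  have hX' : Measurable X' := by
    apply (measurable_Xc N n).comp
    apply measurable_pi_lambda
    intro k
    by_cases h : p k
    · simpa [h] using measurable_pi_apply (⟨k, h⟩ : {k // p k})
    · simpa [h] using measurable_const
  have key : ∀ e : Fin (N + 1) → ℝ, Xc N n e = X' (fun k : {k // p k} => e k) := by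
    intro e
    apply Xc_congr
    intro k hk
    have hpk : p k := hk
    show e k = _
    simp only [hX'def]
    rw [dif_pos hpk]
  have hmq : Measurable (fun q : ({k // p k} → ℝ) × ({k // ¬ p k} → ℝ) =>
      (X' q.1, q.2 ⟨j, hjp⟩)) :=
    (hX'.comp measurable_fst).prodMk ((measurable_pi_apply _).comp measurable_snd)
  have hcomp : (fun e : Fin (N + 1) → ℝ => (Xc N n e, e j))
      = (fun q : ({k // p k} → ℝ) × ({k // ¬ p k} → ℝ) => (X' q.1, q.2 ⟨j, hjp⟩)) ∘ equiv := by
    funext e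
    show (Xc N n e, e j) = (X' ((equiv e).1), (equiv e).2 ⟨j, hjp⟩)
    rw [key e]
    rfl
  have mpmap : (μpi N).map equiv = ((Measure.pi fun _ : {k // p k} => SE 0).prod
      (Measure.pi fun _ : {k // ¬ p k} => SE 0)) := mp.map_eq
  have hfst : ((Measure.pi fun _ : {k // p k} => SE 0).prod
      (Measure.pi fun _ : {k // ¬ p k} => SE 0)).map Prod.fst
      = (Measure.pi fun _ : {k // p k} => SE 0) := by
    rw [Measure.map_fst_prod]
    simp
  have hXmap : (μpi N).map (Xc N n)
      = (Measure.pi fun _ : {k // p k} => SE 0).map X' := by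
    have e1 : (μpi N).map (Xc N n) = ((μpi N).map equiv).map (X' ∘ Prod.fst) := by
      rw [Measure.map_map (hX'.comp measurable_fst) equiv.measurable]
      congr 1
      funext e
      exact key e
    rw [e1, mpmap, ← Measure.map_map hX' measurable_fst, hfst]
  calc (μpi N).map (fun e => (Xc N n e, e j))
      = ((μpi N).map equiv).map (fun q : ({k // p k} → ℝ) × ({k // ¬ p k} → ℝ) =>
          (X' q.1, q.2 ⟨j, hjp⟩)) := by
        rw [Measure.map_map hmq equiv.measurable, hcomp]
    _ = ((Measure.pi fun _ : {k // p k} => SE 0).prod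
          (Measure.pi fun _ : {k // ¬ p k} => SE 0)).map
          (Prod.map X' (fun b : {k // ¬ p k} → ℝ => b ⟨j, hjp⟩)) := by
        rw [mpmap]
        rfl
    _ = ((Measure.pi fun _ : {k // p k} => SE 0).map X').prod
          ((Measure.pi fun _ : {k // ¬ p k} => SE 0).map (fun b => b ⟨j, hjp⟩)) :=
        (Measure.map_prod_map _ _ hX' (measurable_pi_apply _)).symm
    _ = ((μpi N).map (Xc N n)).prod (SE 0) := by
        rw [hXmap, pi_map_eval (fun _ : {k // ¬ p k} => SE 0) ⟨j, hjp⟩]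

lemma Xc_law (N : ℕ) : ∀ n, n ≤ N → (μpi N).map (Xc N n) = SE n := by
  intro n
  induction n with
  | zero =>
    intro _
    have : Xc N 0 = Function.eval (0 : Fin (N + 1)) := rfl
    unfold μpi
    rw [this, pi_map_eval]
    norm_num
  | succ n ih =>
    intro hn
    have hpair := pair_law N n hn
    have hcomp : Xc N (n + 1) = (fun pr : ℝ × ℝ =>
        if (n : ℝ) + 1 ≤ pr.1 then pr.1 else ((n : ℝ) + 1) + pr.2)
        ∘ (fun e => (Xc N n e, e ((n + 1 : ℕ) : Fin (N + 1)))) := rfl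
    rw [hcomp, ← Measure.map_map (measurable_step (n : ℝ))
      ((measurable_Xc N n).prodMk (measurable_pi_apply _)), hpair,
      ih (by omega), SE_step]
    norm_num

open Classical in
lemma card_image_firstOcc {n : ℕ} (f : Fin n → ℝ) :
    (Finset.univ.image f).card
      = (Finset.univ.filter (fun i => ∀ j, j < i → f j ≠ f i)).card := by
  symm
  apply Finset.card_bij (fun i _ => f i)
  · intro a ha
    exact Finset.mem_image_of_mem f (Finset.mem_univ a)
  · intro a1 ha1 a2 ha2 hf
    simp only [Finset.mem_filter] at ha1 ha2
    rcases lt_trichotomy a1 a2 with h | h | h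
    · exact absurd hf (ha2.2 a1 h)
    · exact h
    · exact absurd hf.symm (ha1.2 a2 h)
  · intro b hb
    obtain ⟨k, _, hk⟩ := Finset.mem_image.mp hb
    have hne : (Finset.univ.filter (fun j => f j = f k)).Nonempty :=
      ⟨k, Finset.mem_filter.mpr ⟨Finset.mem_univ k, rfl⟩⟩
    set i := (Finset.univ.filter (fun j => f j = f k)).min' hne with hi
    have him : i ∈ Finset.univ.filter (fun j => f j = f k) := Finset.min'_mem _ hne
    have hfi : f i = f k := (Finset.mem_filter.mp him).2
    refine ⟨i, Finset.mem_filter.mpr ⟨Finset.mem_univ i, ?_⟩, by rw [hfi, hk]⟩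
    intro j hj hfj
    have : i ≤ j := Finset.min'_le _ _ (Finset.mem_filter.mpr
      ⟨Finset.mem_univ j, by rw [hfj, hfi]⟩)
    exact absurd hj (not_lt.mpr this)

open Classical in
lemma measurable_Ncard {n : ℕ} :
    Measurable (fun f : Fin n → ℝ => ((Finset.univ.image f).card : ℝ)) := by
  have h : (fun f : Fin n → ℝ => ((Finset.univ.image f).card : ℝ))
      = fun f => ∑ i : Fin n, (if ∀ j, j < i → f j ≠ f i then (1 : ℝ) else 0) := by
    funext f
    rw [card_image_firstOcc f, Finset.card_filter]
    push_cast
    exact Finset.sum_congr rfl fun i _ => by split <;> simp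
  rw [h]
  apply Finset.measurable_sum
  intro i _
  have hs : MeasurableSet {f : Fin n → ℝ | ∀ j, j < i → f j ≠ f i} := by
    have : {f : Fin n → ℝ | ∀ j, j < i → f j ≠ f i}
        = ⋂ j, ⋂ (_ : j < i), {f : Fin n → ℝ | f j ≠ f i} := by
      ext f; simp
    rw [this]
    exact MeasurableSet.iInter fun j => MeasurableSet.iInter fun _ =>
      (measurableSet_eq_fun (measurable_pi_apply j) (measurable_pi_apply i)).compl
  exact Measurable.ite hs measurable_const measurable_const

open Classical in
lemma card_lower {N : ℕ} (f : Fin (N + 1) → ℝ)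
    (hf : ∀ j : Fin (N + 1), ((j : ℕ) : ℝ) ≤ f j) :
    1 + ∑ i : Fin N, (if f i.castSucc < (i : ℕ) + 1 then (1 : ℝ) else 0)
      ≤ ((Finset.univ.image f).card : ℝ) := by
  set T := Finset.univ.filter (fun i : Fin N => f i.castSucc < (i : ℕ) + 1) with hT
  have hsum : ∑ i : Fin N, (if f i.castSucc < (i : ℕ) + 1 then (1 : ℝ) else 0)
      = (T.card : ℝ) := by
    rw [hT, Finset.card_filter]
    push_cast
    exact Finset.sum_congr rfl fun i _ => by split <;> simp
  have hmem : f (Fin.last N) ∈ Finset.univ.image f :=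
    Finset.mem_image_of_mem f (Finset.mem_univ _)
  have hmaps : ∀ i ∈ T, f i.castSucc ∈ (Finset.univ.image f).erase (f (Fin.last N)) := by
    intro i hi
    have hlt : f i.castSucc < (i : ℕ) + 1 := (Finset.mem_filter.mp hi).2
    have hle : ((i : ℕ) : ℝ) + 1 ≤ N := by
      exact_mod_cast Nat.succ_le_of_lt i.isLt
    refine Finset.mem_erase.mpr ⟨?_, Finset.mem_image_of_mem f (Finset.mem_univ _)⟩
    have hlast : ((N : ℕ) : ℝ) ≤ f (Fin.last N) := by
      have := hf (Fin.last N)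
      simpa using this
    intro heq
    rw [heq] at hlt
    linarith
  have hinj : Set.InjOn (fun i : Fin N => f i.castSucc) T := by
    intro a ha b hb hab
    by_contra hne
    rcases lt_or_gt_of_ne hne with h | h
    · have h1 : f a.castSucc < (a : ℕ) + 1 := (Finset.mem_filter.mp ha).2
      have h2 : ((b : ℕ) : ℝ) ≤ f b.castSucc := by simpa using hf b.castSucc
      have : ((a : ℕ) : ℝ) + 1 ≤ ((b : ℕ) : ℝ) := by exact_mod_cast Nat.succ_le_of_lt h
      simp only [] at hab
      rw [hab] at h1
      linarith
    · have h1 : f b.castSucc < (b : ℕ) + 1 := (Finset.mem_filter.mp hb).2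
      have h2 : ((a : ℕ) : ℝ) ≤ f a.castSucc := by simpa using hf a.castSucc
      have : ((b : ℕ) : ℝ) + 1 ≤ ((a : ℕ) : ℝ) := by exact_mod_cast Nat.succ_le_of_lt h
      simp only [] at hab
      rw [← hab] at h1
      linarith
  have hcard : T.card ≤ ((Finset.univ.image f).erase (f (Fin.last N))).card :=
    Finset.card_le_card_of_injOn _ hmaps hinj
  rw [Finset.card_erase_of_mem hmem] at hcard
  have hpos : 1 ≤ (Finset.univ.image f).card := Finset.card_pos.mpr ⟨_, hmem⟩
  rw [hsum]
  have h4 : T.card + 1 ≤ (Finset.univ.image f).card := by omega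
  have h5 : (T.card : ℝ) + 1 ≤ ((Finset.univ.image f).card : ℝ) := by exact_mod_cast h4
  linarith

open Classical in
lemma card_upper {N : ℕ} (f : Fin (N + 1) → ℝ) :
    ((Finset.univ.image f).card : ℝ)
      ≤ 1 + ∑ i : Fin N, (if f i.castSucc ≠ f i.succ then (1 : ℝ) else 0) := by
  set D := Finset.univ.filter (fun i : Fin N => f i.castSucc ≠ f i.succ) with hD
  have hsum : ∑ i : Fin N, (if f i.castSucc ≠ f i.succ then (1 : ℝ) else 0)
      = (D.card : ℝ) := by
    rw [hD, Finset.card_filter]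
    push_cast
    exact Finset.sum_congr rfl fun i _ => by split <;> simp
  have hclaim : ∀ k : Fin (N + 1), f k ∈ insert (f 0) (D.image fun i => f i.succ) := by
    intro k
    induction k using Fin.induction with
    | zero => exact Finset.mem_insert_self _ _
    | succ i ih =>
      by_cases h : f i.castSucc = f i.succ
      · rw [← h]
        exact ih
      · exact Finset.mem_insert_of_mem (Finset.mem_image_of_mem _
          (Finset.mem_filter.mpr ⟨Finset.mem_univ i, h⟩))
  have hsub : Finset.univ.image f ⊆ insert (f 0) (D.image fun i => f i.succ) := by
    intro v hv
    obtain ⟨k, _, hk⟩ := Finset.mem_image.mp hv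
    rw [← hk]
    exact hclaim k
  have h1 : (Finset.univ.image f).card ≤ (insert (f 0) (D.image fun i => f i.succ)).card :=
    Finset.card_le_card hsub
  have h2 : (insert (f 0) (D.image fun i => f i.succ)).card
      ≤ (D.image fun i => f i.succ).card + 1 :=
    Finset.card_insert_le _ _
  have h3 : (D.image fun i => f i.succ).card ≤ D.card := Finset.card_image_le
  rw [hsum]
  have : (Finset.univ.image f).card ≤ 1 + D.card := by omega
  exact_mod_cast this

noncomputable def γc (N : ℕ) : Measure (Fin (N + 1) → ℝ) :=
  (μpi N).map (fun e => fun i : Fin (N + 1) => Xc N i e)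

lemma measurable_Tc (N : ℕ) :
    Measurable (fun e => fun i : Fin (N + 1) => Xc N (i : ℕ) e) :=
  measurable_pi_lambda _ fun i => measurable_Xc N i

instance γc_prob (N : ℕ) : IsProbabilityMeasure (γc N) :=
  Measure.isProbabilityMeasure_map (measurable_Tc N).aemeasurable

lemma γc_marginal (N : ℕ) (i : Fin (N + 1)) :
    (γc N).map (fun f => f i) = SE ((i : ℕ) : ℝ) := by
  unfold γc
  rw [Measure.map_map (measurable_pi_apply i) (measurable_Tc N)]
  exact Xc_law N i (by omega)

lemma ae_ge {N : ℕ} (ρ : Measure (Fin (N + 1) → ℝ))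
    (hmarg : ∀ i : Fin (N + 1), ρ.map (fun f => f i) = SE ((i : ℕ) : ℝ)) :
    ∀ᵐ f ∂ρ, ∀ j : Fin (N + 1), ((j : ℕ) : ℝ) ≤ f j := by
  rw [ae_all_iff]
  intro j
  have h0 : ρ ((fun f => f j) ⁻¹' Iio ((j : ℕ) : ℝ)) = 0 := by
    rw [← Measure.map_apply (measurable_pi_apply j) measurableSet_Iio, hmarg j, SE_Iio_self]
  rw [ae_iff]
  convert h0 using 2
  ext f
  simp [not_le]

open Classical in
lemma integral_onePlus {N : ℕ} (ρ : Measure (Fin (N + 1) → ℝ)) [IsProbabilityMeasure ρ]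
    (hmarg : ∀ i : Fin (N + 1), ρ.map (fun f => f i) = SE ((i : ℕ) : ℝ)) :
    ∫ f, (1 + ∑ i : Fin N, (if f i.castSucc < ((i : ℕ) : ℝ) + 1 then (1 : ℝ) else 0)) ∂ρ
      = 1 + N * (1 - Real.exp (-1)) := by
  have hsetm : ∀ i : Fin N, MeasurableSet {f : Fin (N + 1) → ℝ | f i.castSucc < ((i : ℕ) : ℝ) + 1} :=
    fun i => measurableSet_lt (measurable_pi_apply _) measurable_const
  have hind : ∀ i : Fin N, (fun f : Fin (N + 1) → ℝ =>
      (if f i.castSucc < ((i : ℕ) : ℝ) + 1 then (1 : ℝ) else 0))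
      = {f : Fin (N + 1) → ℝ | f i.castSucc < ((i : ℕ) : ℝ) + 1}.indicator (fun _ => (1 : ℝ)) := by
    intro i
    funext f
    simp [Set.indicator_apply]
  have hint : ∀ i : Fin N, Integrable (fun f : Fin (N + 1) → ℝ =>
      (if f i.castSucc < ((i : ℕ) : ℝ) + 1 then (1 : ℝ) else 0)) ρ := by
    intro i
    rw [hind i]
    exact (integrable_const (1 : ℝ)).indicator (hsetm i)
  rw [integral_add (integrable_const 1) (integrable_finset_sum _ fun i _ => hint i),
    integral_const, integral_finset_sum _ fun i _ => hint i]
  have hval : ∀ i : Fin N, ∫ f, (if f i.castSucc < ((i : ℕ) : ℝ) + 1 then (1 : ℝ) else 0) ∂ρ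
      = 1 - Real.exp (-1) := by
    intro i
    rw [hind i, integral_indicator_const _ (hsetm i)]
    have hmeas : ρ {f : Fin (N + 1) → ℝ | f i.castSucc < ((i : ℕ) : ℝ) + 1}
        = ENNReal.ofReal (1 - Real.exp (-1)) := by
      have : {f : Fin (N + 1) → ℝ | f i.castSucc < ((i : ℕ) : ℝ) + 1}
          = (fun f => f i.castSucc) ⁻¹' Iio (((i : ℕ) : ℝ) + 1) := rfl
      rw [this, ← Measure.map_apply (measurable_pi_apply _) measurableSet_Iio, hmarg i.castSucc]
      have hc : (((i.castSucc : ℕ)) : ℝ) = ((i : ℕ) : ℝ) := by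
        simp [Fin.coe_castSucc]
      rw [hc, SE_Iio_succ]
    rw [measureReal_def, hmeas, ENNReal.toReal_ofReal (by
      have := Real.exp_le_one_iff.mpr (by norm_num : (-1 : ℝ) ≤ 0)
      linarith)]
    simp
  rw [Finset.sum_congr rfl fun i _ => hval i, Finset.sum_const, Finset.card_univ,
    Fintype.card_fin]
  simp [nsmul_eq_mul]

lemma Xc_ge {N : ℕ} {e : Fin (N + 1) → ℝ} (he : ∀ k, 0 ≤ e k) :
    ∀ n : ℕ, (n : ℝ) ≤ Xc N n e := by
  intro n
  induction n with
  | zero => simpa [Xc] using he 0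
  | succ n ih =>
    show (((n + 1 : ℕ)) : ℝ) ≤ if ((n : ℝ) + 1) ≤ Xc N n e then Xc N n e
      else ((n : ℝ) + 1) + e ((n + 1 : ℕ) : Fin (N + 1))
    set t := e ((n + 1 : ℕ) : Fin (N + 1)) with ht
    have h0 : 0 ≤ t := he _
    split
    · push_cast
      linarith
    · push_cast
      linarith

lemma γc_ae_Q2 (N : ℕ) : ∀ᵐ f ∂γc N, ∀ i : Fin N,
    f i.castSucc ≠ f i.succ → f i.castSucc < ((i : ℕ) : ℝ) + 1 := by
  rw [ae_all_iff]
  intro i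
  rw [ae_iff]
  have hB : MeasurableSet {f : Fin (N + 1) → ℝ |
      ¬(f i.castSucc ≠ f i.succ → f i.castSucc < ((i : ℕ) : ℝ) + 1)} := by
    have : {f : Fin (N + 1) → ℝ |
        ¬(f i.castSucc ≠ f i.succ → f i.castSucc < ((i : ℕ) : ℝ) + 1)}
        = ({f : Fin (N + 1) → ℝ | f i.castSucc = f i.succ}ᶜ
          ∩ {f : Fin (N + 1) → ℝ | f i.castSucc < ((i : ℕ) : ℝ) + 1}ᶜ) := by
      ext f; simp [Classical.not_imp]
    rw [this]
    have m1 : MeasurableSet {f : Fin (N + 1) → ℝ | f i.castSucc = f i.succ} :=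
      measurableSet_eq_fun (measurable_pi_apply i.castSucc) (measurable_pi_apply i.succ)
    have m2 : MeasurableSet {f : Fin (N + 1) → ℝ | f i.castSucc < ((i : ℕ) : ℝ) + 1} :=
      measurableSet_lt (measurable_pi_apply _) measurable_const
    exact m1.compl.inter m2.compl
  unfold γc
  rw [Measure.map_apply (measurable_Tc N) hB]
  convert measure_empty
  · ext e
    simp only [Set.mem_preimage, Set.mem_setOf_eq, Set.mem_empty_iff_false, iff_false,
      not_not, Classical.not_imp]
    rintro ⟨hne, hnlt⟩
    apply hne
    have hcond : ((i : ℕ) : ℝ) + 1 ≤ Xc N (i : ℕ) e := not_lt.mp hnlt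
    have hsucc : Xc N ((i : ℕ) + 1) e = Xc N (i : ℕ) e := if_pos hcond
    have h1 : ((i.castSucc : Fin (N + 1)) : ℕ) = (i : ℕ) := Fin.coe_castSucc i
    have h2 : ((i.succ : Fin (N + 1)) : ℕ) = (i : ℕ) + 1 := Fin.val_succ i
    rw [h1, h2, hsucc]
  · infer_instance

open Classical in
lemma γc_integral (N : ℕ) :
    ∫ f, ((Finset.univ.image f).card : ℝ) ∂γc N = 1 + N * (1 - Real.exp (-1)) := by
  have hae : ∀ᵐ f ∂γc N, ((Finset.univ.image f).card : ℝ)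
      = 1 + ∑ i : Fin N, (if f i.castSucc < ((i : ℕ) : ℝ) + 1 then (1 : ℝ) else 0) := by
    filter_upwards [ae_ge (γc N) (γc_marginal N), γc_ae_Q2 N] with f h1 h2
    apply le_antisymm
    · refine le_trans (card_upper f) ?_
      gcongr (1 + ?_)
      apply Finset.sum_le_sum
      intro i _
      by_cases hne : f i.castSucc ≠ f i.succ
      · rw [if_pos hne, if_pos (h2 i hne)]
      · rw [if_neg hne]
        split <;> norm_num
    · exact card_lower f h1
  rw [integral_congr_ae hae]
  exact integral_onePlus _ (γc_marginal N)

open Classical in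
lemma lower_bound {N : ℕ} (ρ : Measure (Fin (N + 1) → ℝ)) [IsProbabilityMeasure ρ]
    (hmarg : ∀ i : Fin (N + 1), ρ.map (fun f => f i) = SE ((i : ℕ) : ℝ)) :
    1 + N * (1 - Real.exp (-1)) ≤ ∫ f, ((Finset.univ.image f).card : ℝ) ∂ρ := by
  rw [← integral_onePlus ρ hmarg]
  have hsetm : ∀ i : Fin N, MeasurableSet {f : Fin (N + 1) → ℝ | f i.castSucc < ((i : ℕ) : ℝ) + 1} :=
    fun i => measurableSet_lt (measurable_pi_apply _) measurable_const
  have hint : ∀ i : Fin N, Integrable (fun f : Fin (N + 1) → ℝ =>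
      (if f i.castSucc < ((i : ℕ) : ℝ) + 1 then (1 : ℝ) else 0)) ρ := by
    intro i
    have : (fun f : Fin (N + 1) → ℝ => (if f i.castSucc < ((i : ℕ) : ℝ) + 1 then (1 : ℝ) else 0))
        = {f : Fin (N + 1) → ℝ | f i.castSucc < ((i : ℕ) : ℝ) + 1}.indicator (fun _ => (1 : ℝ)) := by
      funext f
      simp [Set.indicator_apply]
    rw [this]
    exact (integrable_const (1 : ℝ)).indicator (hsetm i)
  apply integral_mono_ae
  · exact (integrable_const 1).add (integrable_finset_sum _ fun i _ => hint i)
  · apply Integrable.mono' (integrable_const ((N + 1 : ℕ) : ℝ))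
      measurable_Ncard.aestronglyMeasurable
    apply Filter.Eventually.of_forall
    intro f
    rw [Real.norm_eq_abs, abs_of_nonneg (by positivity)]
    have h1 : (Finset.univ.image f).card ≤ N + 1 := by
      refine le_trans (Finset.card_image_le) ?_
      simp
    exact_mod_cast h1
  · filter_upwards [ae_ge ρ hmarg] with f hf
    exact card_lower f hf

open Classical in
/-- For shifted exponential measures P^i = i + Exp(1), i = 0,...,C−1, the optimal
multi-marginal coupling objective equals G* = C − (C−1)·e^{−1}. -/
theorem stmt11 {C : ℕ} (hC : 1 ≤ C)
    (P : Fin C → Measure ℝ)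
    (hP : ∀ i, P i = volume.withDensity
      (fun x => ENNReal.ofReal
        (if ((i : ℕ) : ℝ) ≤ x then Real.exp (-(x - ((i : ℕ) : ℝ))) else 0))) :
    sInf {r : ℝ | ∃ γ : Measure (Fin C → ℝ), IsProbabilityMeasure γ ∧
        (∀ i, γ.map (fun f => f i) = P i) ∧
        r = ∫ f, ((Finset.univ.image f).card : ℝ) ∂γ} =
      C - (C - 1 : ℝ) * Real.exp (-1) := by
  obtain ⟨N, rfl⟩ : ∃ N, C = N + 1 := ⟨C - 1, by omega⟩
  have hPSE : ∀ i : Fin (N + 1), P i = SE ((i : ℕ) : ℝ) := fun i => hP i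
  apply IsLeast.csInf_eq
  constructor
  · refine ⟨γc N, inferInstance, fun i => by rw [hPSE i]; exact γc_marginal N i, ?_⟩
    rw [γc_integral N]
    push_cast
    ring
  · rintro r ⟨ρ, hprob, hmarg, rfl⟩
    haveI := hprob
    have hm : ∀ i : Fin (N + 1), ρ.map (fun f => f i) = SE ((i : ℕ) : ℝ) :=
      fun i => (hmarg i).trans (hPSE i)
    calc ((N + 1 : ℕ) : ℝ) - ((N + 1 : ℕ) - 1 : ℝ) * Real.exp (-1)
        = 1 + N * (1 - Real.exp (-1)) := by push_cast; ring
      _ ≤ _ := lower_bound ρ hm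
end

section
/- Let quantities α^A, α^B ∈ [0,1] and k^A, k^B ≥ 0 satisfy α^A ≤ α^B. Then (α^A k^A · α^B k^B)/(α^A k^A + α^B k^B) ≥ α^A · (k^A k^B)/(k^A + k^B), with the convention 0/0 = 0. Consequently, pointwise in y, the one-step (joint) Poisson-matching lower bound for Metropolis–Hastings coupling dominates the two-step bound: ∫ [α(x^A,y)k(y|x^A)·α(x^B,y)k(y|x^B)] / [α(x^A,y)k(y|x^A) + α(x^B,y)k(y|x^B)] dy ≥ ∫ min(α(x^A,y), α(x^B,y)) · [k(y|x^A)k(y|x^B)] / [k(y|x^A)+k(y|x^B)] dy. -/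
/-!
The map `(x, y) ↦ x * y / (x + y)` is monotone in each nonnegative argument and commutes with
scaling, so with `m = min a b` we get
`m * (c * d / (c + d)) = (m c)(m d) / (m c + m d) ≤ (a c)(b d) / (a c + b d)`.
-/

open MeasureTheory

lemma mul_div_add_le_mul_div_add_right {x y z : ℝ} (hx : 0 ≤ x) (hy : 0 ≤ y) (hyz : y ≤ z) :
    x * y / (x + y) ≤ x * z / (x + z) := by
  rcases hx.eq_or_lt with rfl | hx
  · simp
  rw [div_le_div_iff₀ (by positivity) (by linarith)]
  nlinarith [mul_le_mul_of_nonneg_left hyz (mul_nonneg hx.le hx.le)]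

lemma mul_div_add_le_mul_div_add {x x' y y' : ℝ} (hx : 0 ≤ x) (hy : 0 ≤ y) (hxx' : x ≤ x')
    (hyy' : y ≤ y') : x * y / (x + y) ≤ x' * y' / (x' + y') :=
  calc x * y / (x + y) ≤ x * y' / (x + y') := mul_div_add_le_mul_div_add_right hx hy hyy'
    _ = y' * x / (y' + x) := by rw [mul_comm, add_comm]
    _ ≤ y' * x' / (y' + x') := mul_div_add_le_mul_div_add_right (hy.trans hyy') hx hxx'
    _ = x' * y' / (x' + y') := by rw [mul_comm, add_comm]

lemma mul_mul_div_add_eq (a c d : ℝ) : a * (c * d) / (c + d) = a * c * (a * d) / (a * c + a * d) := by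
  rcases eq_or_ne a 0 with rfl | ha
  · simp
  rw [← mul_add, show a * c * (a * d) = a * (a * (c * d)) by ring, mul_div_mul_left _ _ ha,
    mul_div_assoc]

lemma min_mul_mul_div_add_le {a b c d : ℝ} (ha : 0 ≤ a) (hb : 0 ≤ b) (hc : 0 ≤ c) (hd : 0 ≤ d) :
    min a b * (c * d) / (c + d) ≤ a * c * (b * d) / (a * c + b * d) := by
  rw [mul_mul_div_add_eq]
  have hm : 0 ≤ min a b := le_min ha hb
  exact mul_div_add_le_mul_div_add (mul_nonneg hm hc) (mul_nonneg hm hd)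
    (mul_le_mul_of_nonneg_right (min_le_left a b) hc)
    (mul_le_mul_of_nonneg_right (min_le_right a b) hd)

/-- Pointwise inequality (α^A k^A · α^B k^B)/(α^A k^A + α^B k^B) ≥
α^A (k^A k^B)/(k^A + k^B) for α^A ≤ α^B in [0,1] (with the 0/0 = 0 convention),
and consequently the one-step (joint) Poisson-matching lower bound for MH coupling
dominates the two-step bound, integrating over the proposal space. -/
theorem stmt13 {Y : Type*} [MeasurableSpace Y] (lam : Measure Y)
    (kA kB a b : Y → ℝ)
    (hkA : ∀ y, 0 ≤ kA y) (hkB : ∀ y, 0 ≤ kB y)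
    (ha : ∀ y, a y ∈ Set.Icc (0:ℝ) 1) (hb : ∀ y, b y ∈ Set.Icc (0:ℝ) 1)
    (hint1 : Integrable
      (fun y => a y * kA y * (b y * kB y) / (a y * kA y + b y * kB y)) lam)
    (hint2 : Integrable
      (fun y => min (a y) (b y) * (kA y * kB y) / (kA y + kB y)) lam) :
    (∀ (aA aB cA cB : ℝ), aA ∈ Set.Icc (0:ℝ) 1 → aB ∈ Set.Icc (0:ℝ) 1 →
      0 ≤ cA → 0 ≤ cB → aA ≤ aB →
      aA * (cA * cB) / (cA + cB) ≤ aA * cA * (aB * cB) / (aA * cA + aB * cB)) ∧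
    ∫ y, min (a y) (b y) * (kA y * kB y) / (kA y + kB y) ∂lam ≤
      ∫ y, a y * kA y * (b y * kB y) / (a y * kA y + b y * kB y) ∂lam := by
  refine ⟨fun aA aB cA cB hA hB hcA hcB hle => ?_, ?_⟩
  · simpa only [min_eq_left hle] using min_mul_mul_div_add_le hA.1 hB.1 hcA hcB
  · exact integral_mono hint2 hint1 fun y =>
      min_mul_mul_div_add_le (ha y).1 (hb y).1 (hkA y) (hkB y)
end
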